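/- arXiv:2308.10579 — 4 statements merged into one kernel-verified Lean document; each statement's English description precedes it below -/
import Mathlib

section
/- Let V be a finite set with |V| = n ≥ 2, let p be a demand distribution on V, and let Δ ≥ 3 be an integer. Then there exists a finite simple graph G = (V ∪ U, E), where U is a finite set disjoint from V, such that every vertex of G has degree at most Δ and the expected path length satisfies Σ_{{u,v} ⊆ V} p({u,v})·d_G(u,v) ≤ Σ_{v ∈ V, p(v) > 0} p(v)·H_{Δ−1}(p_v) + 1. -/
open scoped ENNReal BigOperators

/-- Base-`d` entropy of a finitely supported distribution `q`:
`H_d(q) = Σ_{x : q x > 0} q x · log_d (1 / q x)`. -/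
noncomputable def entropyBase (d : ℕ) {X : Type*} [Fintype X] (q : X → ℝ) : ℝ :=
  ∑ x, if 0 < q x then q x * Real.logb d (1 / q x) else 0

/-- `p` is a demand distribution on `V`: a symmetric `[0,1]`-valued function on ordered
pairs, vanishing on the diagonal, whose total mass over unordered pairs is 1 (so the
double sum over ordered pairs is 2). -/
def IsDemandDistribution {V : Type*} [Fintype V] (p : V → V → ℝ) : Prop :=
  (∀ u v, p u v = p v u) ∧ (∀ v, p v v = 0) ∧ (∀ u v, 0 ≤ p u v) ∧
    (∀ u v, p u v ≤ 1) ∧ (∑ u, ∑ v, p u v) = 2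

/-- Expected path length `Σ_{{u,v} ⊆ V} p({u,v})·d_G(u,v)` of a host graph `G`
containing `V` via the map `ι`, computed in `ℝ≥0∞` (distance `+∞` for disconnected
pairs, with the convention `0·∞ = 0`); each unordered pair is counted once via the
factor `1/2` on the ordered double sum. -/
noncomputable def expectedPathLength {V W : Type*} [Fintype V] (p : V → V → ℝ)
    (G : SimpleGraph W) (ι : V → W) : ℝ≥0∞ :=
  (1 / 2) * ∑ u, ∑ v, ENNReal.ofReal (p u v) * (G.edist (ι u) (ι v) : ℝ≥0∞)

/-- The marginal `p(v) = Σ_{u ≠ v} p({v,u})`. -/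
noncomputable def marginal {V : Type*} [Fintype V] (p : V → V → ℝ) (v : V) : ℝ :=
  ∑ u, p v u

/-- `Σ_{v ∈ V, p(v) > 0} p(v)·H_d(p_v)` where `p_v(u) = p({v,u})/p(v)`. -/
noncomputable def condEntropySum (d : ℕ) {V : Type*} [Fintype V] (p : V → V → ℝ) : ℝ :=
  ∑ v, if 0 < marginal p v then
    marginal p v * entropyBase d (fun u => p v u / marginal p v) else 0

namespace DAN

open Classical Real Finset

variable {V : Type} [Fintype V]

/-- code length: least `c ≥ 1` with `p(v) ≤ p(v,u) · r^c`, i.e. `r^{-c} ≤ p_v(u)`. -/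
noncomputable def cc (p : V → V → ℝ) (r : ℕ) (v u : V) : ℕ :=
  sInf {c : ℕ | 1 ≤ c ∧ marginal p v ≤ p v u * (r : ℝ) ^ c}

/-- sorting key for the partners of `v` (sorted by code length, ties by a fixed order). -/
noncomputable def keyf (p : V → V → ℝ) (r : ℕ) (v u : V) : ℕ :=
  cc p r v u * Fintype.card V + ((Fintype.equivFin V) u : ℕ)

/-- canonical Kraft index of the port of the pair `{v,u}` on `v`'s side, at depth
`cc p r v u` in the `r`-ary tree of `v`. -/
noncomputable def kval (p : V → V → ℝ) (r : ℕ) (v u : V) : ℕ :=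
  ∑ w ∈ Finset.univ.filter
      (fun w => 0 < p v w ∧ keyf p r v w < keyf p r v u),
    r ^ (cc p r v u - cc p r v w)

/-- tree positions actually used: strict ancestors of some port. -/
def RelNode (p : V → V → ℝ) (r : ℕ) (v : V) (d k : ℕ) : Prop :=
  1 ≤ d ∧ ∃ u, 0 < p v u ∧ d < cc p r v u ∧
    k = kval p r v u / r ^ (cc p r v u - d)

/-- the Steiner nodes -/
def UU (p : V → V → ℝ) (r : ℕ) : Type :=
  {x : V × ℕ × ℕ // RelNode p r x.1 x.2.1 x.2.2}

/-- the tree node of tree `v` at depth `d`, index `k` (the root `v` itself for `d = 0`). -/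
noncomputable def node (p : V → V → ℝ) (r : ℕ) (v : V) (d k : ℕ) : V ⊕ UU p r :=
  if h : RelNode p r v d k then Sum.inr ⟨(v, d, k), h⟩ else Sum.inl v

/-- the endpoint, in `v`'s tree, of the pair-edge of `{v,u}`: the parent of the port. -/
noncomputable def endp (p : V → V → ℝ) (r : ℕ) (v u : V) : V ⊕ UU p r :=
  node p r v (cc p r v u - 1) (kval p r v u / r)

inductive Rel (p : V → V → ℝ) (r : ℕ) : (V ⊕ UU p r) → (V ⊕ UU p r) → Prop
  | tree : ∀ (v : V) (d k : ℕ), RelNode p r v (d + 1) k →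
      Rel p r (node p r v d (k / r)) (node p r v (d + 1) k)
  | pair : ∀ (v u : V), 0 < p v u → Rel p r (endp p r v u) (endp p r u v)

/-- the host graph -/
noncomputable def G (p : V → V → ℝ) (r : ℕ) : SimpleGraph (V ⊕ UU p r) :=
  SimpleGraph.fromRel (Rel p r)

section lemmas

variable {p : V → V → ℝ} {r : ℕ}

/-! ### basic facts about `cc` -/

lemma marginal_nonneg (hnn : ∀ u v, 0 ≤ p u v) (v : V) : 0 ≤ marginal p v :=
  Finset.sum_nonneg fun u _ => hnn v u

lemma le_marginal (hnn : ∀ u v, 0 ≤ p u v) (v u : V) : p v u ≤ marginal p v :=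
  Finset.single_le_sum (fun w _ => hnn v w) (Finset.mem_univ u)

lemma cc_mem (hr : 2 ≤ r) (hq : 0 < p v u) :
    1 ≤ cc p r v u ∧ marginal p v ≤ p v u * (r : ℝ) ^ (cc p r v u) := by
  have h1r : (1 : ℝ) < r := by exact_mod_cast hr
  have hne : {c : ℕ | 1 ≤ c ∧ marginal p v ≤ p v u * (r : ℝ) ^ c}.Nonempty := by
    obtain ⟨m, hm⟩ := pow_unbounded_of_one_lt (marginal p v / p v u) h1r
    refine ⟨m + 1, by omega, ?_⟩
    have h1 : marginal p v / p v u < (r : ℝ) ^ (m + 1) :=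
      hm.trans_le (pow_le_pow_right₀ (by linarith) (by omega))
    calc marginal p v = (marginal p v / p v u) * p v u := by field_simp
    _ ≤ (r : ℝ) ^ (m + 1) * p v u := by nlinarith
    _ = p v u * (r : ℝ) ^ (m + 1) := by ring
  exact Nat.sInf_mem hne

lemma cc_min (hr : 2 ≤ r) (hq : 0 < p v u) {c : ℕ} (hc : 1 ≤ c) (hlt : c < cc p r v u) :
    p v u * (r : ℝ) ^ c < marginal p v := by
  by_contra h
  push_neg at h
  have : cc p r v u ≤ c := Nat.sInf_le ⟨hc, h⟩
  omega

lemma cc_le_logb (hr : 2 ≤ r) (hnn : ∀ u v, 0 ≤ p u v) (hq : 0 < p v u) :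
    (cc p r v u : ℝ) ≤ Real.logb r (marginal p v / p v u) + 1 := by
  have h1r : (1 : ℝ) < r := by exact_mod_cast hr
  have hle := le_marginal hnn v u
  rcases Nat.lt_or_ge (cc p r v u) 2 with h2 | h2
  · have h1 : (1:ℕ) ≤ cc p r v u := (cc_mem hr hq).1
    have hcc1 : cc p r v u = 1 := by omega
    have : (0:ℝ) ≤ Real.logb r (marginal p v / p v u) :=
      Real.logb_nonneg h1r ((one_le_div hq).2 hle)
    rw [hcc1]
    push_cast
    linarith
  · have hlt : p v u * (r : ℝ) ^ (cc p r v u - 1) < marginal p v :=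
      cc_min hr hq (by omega) (by omega)
    have harg : (r : ℝ) ^ (cc p r v u - 1) < marginal p v / p v u := by
      rw [lt_div_iff₀ hq]; linarith [hlt]
    have hlog : Real.logb r ((r : ℝ) ^ (cc p r v u - 1)) <
        Real.logb r (marginal p v / p v u) :=
      Real.logb_lt_logb h1r (by positivity) harg
    rw [Real.logb_pow, Real.logb_self_eq_one h1r, mul_one] at hlog
    have : ((cc p r v u - 1 : ℕ) : ℝ) = (cc p r v u : ℝ) - 1 := by
      push_cast [Nat.cast_sub (by omega : 1 ≤ cc p r v u)]; ring
    rw [this] at hlog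
    linarith

/-! ### facts about `kval` -/

lemma key_div (v u : V) : keyf p r v u / Fintype.card V = cc p r v u := by
  have hN : 0 < Fintype.card V := Fintype.card_pos_iff.2 ⟨u⟩
  unfold keyf
  rw [add_comm, mul_comm, Nat.add_mul_div_left _ _ hN,
    Nat.div_eq_of_lt ((Fintype.equivFin V) u).isLt, zero_add]

lemma key_lt_of_cc_lt (h : cc p r v w < cc p r v u) : keyf p r v w < keyf p r v u := by
  unfold keyf
  have hw : ((Fintype.equivFin V) w : ℕ) < Fintype.card V := ((Fintype.equivFin V) w).isLt
  calc cc p r v w * Fintype.card V + ((Fintype.equivFin V) w : ℕ)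
      < (cc p r v w + 1) * Fintype.card V := by ring_nf; omega
  _ ≤ cc p r v u * Fintype.card V := Nat.mul_le_mul_right _ (by omega)
  _ ≤ cc p r v u * Fintype.card V + ((Fintype.equivFin V) u : ℕ) := le_self_add

lemma cc_le_of_key_lt (h : keyf p r v w < keyf p r v u) : cc p r v w ≤ cc p r v u := by
  by_contra hc
  push_neg at hc
  exact absurd (key_lt_of_cc_lt hc) (by omega)

lemma key_inj (h : keyf p r v w = keyf p r v u) : w = u := by
  have h1 : cc p r v w = cc p r v u := by
    rw [← key_div (p := p) (r := r) v w, ← key_div (p := p) (r := r) v u, h]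
  have h2 : ((Fintype.equivFin V) w : ℕ) = ((Fintype.equivFin V) u : ℕ) := by
    unfold keyf at h
    rw [h1] at h
    omega
  exact (Fintype.equivFin V).injective (Fin.val_injective h2)

/-- canonical indices grow along the sorted order. -/
lemma kval_ge (hr : 2 ≤ r) (hq : 0 < p v u) (hq' : 0 < p v u')
    (hkey : keyf p r v u < keyf p r v u') :
    r ^ (cc p r v u' - cc p r v u) * (kval p r v u + 1) ≤ kval p r v u' := by
  classical
  set c := cc p r v u with hc
  set c' := cc p r v u' with hc'
  have hcle : c ≤ c' := cc_le_of_key_lt hkey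
  set S : Finset V := Finset.univ.filter
      (fun w => 0 < p v w ∧ keyf p r v w < keyf p r v u) with hS
  set S' : Finset V := Finset.univ.filter
      (fun w => 0 < p v w ∧ keyf p r v w < keyf p r v u') with hS'
  have hsub : insert u S ⊆ S' := by
    intro w hw
    rcases Finset.mem_insert.1 hw with rfl | hw
    · exact Finset.mem_filter.2 ⟨Finset.mem_univ _, hq, hkey⟩
    · rcases Finset.mem_filter.1 hw with ⟨_, hpw, hkw⟩
      exact Finset.mem_filter.2 ⟨Finset.mem_univ _, hpw, hkw.trans hkey⟩
  have hu_not : u ∉ S := by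
    intro hu
    exact absurd (Finset.mem_filter.1 hu).2.2 (lt_irrefl _)
  have h1 : ∑ w ∈ insert u S, r ^ (c' - cc p r v w) ≤ kval p r v u' := by
    rw [kval, ← hS']
    exact Finset.sum_le_sum_of_subset hsub
  rw [Finset.sum_insert hu_not] at h1
  have h2 : ∀ w ∈ S, r ^ (c' - cc p r v w) = r ^ (c' - c) * r ^ (c - cc p r v w) := by
    intro w hw
    rcases Finset.mem_filter.1 hw with ⟨_, _, hkw⟩
    have hwc : cc p r v w ≤ c := cc_le_of_key_lt hkw
    rw [← pow_add]
    congr 1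
    omega
  rw [Finset.sum_congr rfl h2, ← Finset.mul_sum] at h1
  have h3 : r ^ (c' - c) = r ^ (c' - c) * 1 := by ring
  calc r ^ (c' - c) * (kval p r v u + 1)
      = r ^ (c' - c) * ∑ w ∈ S, r ^ (c - cc p r v w) + r ^ (c' - c) := by
        rw [kval, ← hS]; ring
  _ ≤ kval p r v u' := by linarith [h1]

/-- Kraft: ports fit in the `r`-ary tree. -/
lemma kval_lt (hr : 2 ≤ r) (hnn : ∀ u v, 0 ≤ p u v) (hq : 0 < p v u) :
    kval p r v u + 1 ≤ r ^ (cc p r v u) := by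
  classical
  have hrpos : (0:ℝ) < r := by positivity
  set c := cc p r v u with hc
  set S : Finset V := Finset.univ.filter
      (fun w => 0 < p v w ∧ keyf p r v w < keyf p r v u) with hS
  have hu_not : u ∉ S := fun hu => absurd (Finset.mem_filter.1 hu).2.2 (lt_irrefl _)
  have hP : 0 < marginal p v := lt_of_lt_of_le hq (le_marginal hnn v u)
  -- real bound per term
  have hterm : ∀ w ∈ insert u S,
      ((r:ℝ) ^ (c - cc p r v w)) * marginal p v ≤ (r:ℝ) ^ c * p v w := by
    intro w hw
    have hpw : 0 < p v w := by
      rcases Finset.mem_insert.1 hw with rfl | hw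
      · exact hq
      · exact (Finset.mem_filter.1 hw).2.1
    have hwc : cc p r v w ≤ c := by
      rcases Finset.mem_insert.1 hw with rfl | hw
      · exact le_refl _
      · exact cc_le_of_key_lt (Finset.mem_filter.1 hw).2.2
    have hkraft := (cc_mem hr hpw).2
    calc ((r:ℝ) ^ (c - cc p r v w)) * marginal p v
        ≤ ((r:ℝ) ^ (c - cc p r v w)) * (p v w * (r:ℝ) ^ (cc p r v w)) := by
          apply mul_le_mul_of_nonneg_left hkraft (by positivity)
    _ = ((r:ℝ) ^ ((c - cc p r v w) + cc p r v w)) * p v w := by rw [pow_add]; ring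
    _ = (r:ℝ) ^ c * p v w := by rw [Nat.sub_add_cancel hwc]
  have hsum : (((kval p r v u + 1 : ℕ)) : ℝ) * marginal p v ≤ (r:ℝ) ^ c * marginal p v := by
    have h1 : (((kval p r v u + 1 : ℕ)) : ℝ) * marginal p v
        = ∑ w ∈ insert u S, ((r:ℝ) ^ (c - cc p r v w)) * marginal p v := by
      rw [Finset.sum_insert hu_not, ← Finset.sum_mul]
      rw [kval, ← hS]
      push_cast
      rw [Nat.sub_self, pow_zero]
      ring
    have h2 : ∑ w ∈ insert u S, ((r:ℝ) ^ (c - cc p r v w)) * marginal p v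
        ≤ ∑ w ∈ insert u S, (r:ℝ) ^ c * p v w := Finset.sum_le_sum hterm
    have h3 : ∑ w ∈ insert u S, (r:ℝ) ^ c * p v w ≤ (r:ℝ) ^ c * marginal p v := by
      rw [← Finset.mul_sum]
      apply mul_le_mul_of_nonneg_left _ (by positivity)
      rw [marginal]
      exact Finset.sum_le_sum_of_subset_of_nonneg (Finset.subset_univ _)
        (fun w _ _ => hnn v w)
    linarith
  have := le_of_mul_le_mul_right hsum hP
  exact_mod_cast this

lemma port_ne (hr : 2 ≤ r) (hq : 0 < p v u) (hq' : 0 < p v u') (hne : u ≠ u')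
    (hcc : cc p r v u = cc p r v u') : kval p r v u ≠ kval p r v u' := by
  have hkey : keyf p r v u ≠ keyf p r v u' := fun h => hne (key_inj h)
  rcases lt_or_gt_of_ne hkey with h | h
  · have := kval_ge hr hq hq' h
    rw [hcc, Nat.sub_self, pow_zero, one_mul] at this
    omega
  · have := kval_ge hr hq' hq h
    rw [hcc, Nat.sub_self, pow_zero, one_mul] at this
    omega

/-- antichain: no port is a (weak) ancestor of another port. -/
lemma antichain (hr : 2 ≤ r) (hq : 0 < p v u) (hq' : 0 < p v u') (hne : u ≠ u')
    (hcc : cc p r v u ≤ cc p r v u') :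
    kval p r v u' / r ^ (cc p r v u' - cc p r v u) ≠ kval p r v u := by
  have hkey : keyf p r v u ≠ keyf p r v u' := fun h => hne (key_inj h)
  have hrpow : 0 < r ^ (cc p r v u' - cc p r v u) := Nat.pow_pos (by omega)
  rcases lt_or_gt_of_ne hkey with h | h
  · have hge := kval_ge hr hq hq' h
    have : kval p r v u + 1 ≤ kval p r v u' / r ^ (cc p r v u' - cc p r v u) :=
      (Nat.le_div_iff_mul_le hrpow).2 (by linarith [hge])
    omega
  · have hcle : cc p r v u' ≤ cc p r v u := cc_le_of_key_lt h
    have hcc' : cc p r v u = cc p r v u' := le_antisymm hcc hcle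
    rw [hcc', Nat.sub_self, pow_zero, Nat.div_one]
    exact (port_ne hr hq' hq (Ne.symm hne) hcc'.symm)

/-! ### tree nodes and adjacency -/

lemma relNode_anc (h : RelNode p r v (d + 1) k) (hd : 1 ≤ d) :
    RelNode p r v d (k / r) := by
  obtain ⟨-, u, hq, hlt, hk⟩ := h
  refine ⟨hd, u, hq, by omega, ?_⟩
  subst hk
  rw [Nat.div_div_eq_div_mul, ← pow_succ]
  congr 2
  omega

lemma relNode_k_lt (hr : 2 ≤ r) (hnn : ∀ u v, 0 ≤ p u v)
    (h : RelNode p r v d k) : k < r ^ d := by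
  obtain ⟨hd, u, hq, hlt, hk⟩ := h
  subst hk
  have hkv := kval_lt hr hnn hq
  have hlt2 : kval p r v u < r ^ d * r ^ (cc p r v u - d) := by
    rw [← pow_add, (by omega : d + (cc p r v u - d) = cc p r v u)]
    omega
  exact (Nat.div_lt_iff_lt_mul (Nat.pow_pos (by omega))).2 hlt2

lemma node_d_zero (v : V) (k : ℕ) : node p r v 0 k = Sum.inl v := by
  refine dif_neg ?_
  rintro ⟨h1, -⟩
  exact absurd h1 (by omega)

lemma node_of_relNode (h : RelNode p r v d k) :
    node p r v d k = Sum.inr ⟨(v, d, k), h⟩ := dif_pos h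

/-- the owner (tree root) of a node. -/
def owner : V ⊕ UU p r → V := Sum.elim id (fun x => x.1.1)

lemma owner_node (v : V) (d k : ℕ) : owner (node p r v d k) = v := by
  unfold node
  split <;> rfl

lemma owner_endp (v u : V) : owner (endp p r v u) = v := owner_node v _ _

/-- the depth of a node. -/
def dep : V ⊕ UU p r → ℕ := Sum.elim (fun _ => 0) (fun y => y.1.2.1)

lemma adj_tree (hr : 2 ≤ r) (h : RelNode p r v (d + 1) k) :
    (G p r).Adj (node p r v d (k / r)) (node p r v (d + 1) k) := by
  refine ⟨?_, Or.inl (Rel.tree v d k h)⟩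
  rw [node_of_relNode h]
  rcases Nat.eq_zero_or_pos d with rfl | hd
  · rw [node_d_zero]
    simp
  · rw [node_of_relNode (relNode_anc h hd)]
    intro heq
    have h2 : d = d + 1 := congrArg (dep (p := p) (r := r)) heq
    omega

lemma adj_pair (hdiag : ∀ v, p v v = 0) (hq : 0 < p v u) :
    (G p r).Adj (endp p r v u) (endp p r u v) := by
  have hne : v ≠ u := by
    rintro rfl
    rw [hdiag v] at hq
    exact lt_irrefl _ hq
  refine ⟨?_, Or.inl (Rel.pair v u hq)⟩
  intro heq
  have := congrArg (owner (p := p) (r := r)) heq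
  rw [owner_endp, owner_endp] at this
  exact hne this

lemma relNode_endp (hq : 0 < p v u) (h2 : 2 ≤ cc p r v u) :
    RelNode p r v (cc p r v u - 1) (kval p r v u / r) := by
  refine ⟨by omega, u, hq, by omega, ?_⟩
  rw [(by omega : cc p r v u - (cc p r v u - 1) = 1), pow_one]

/-! ### distance bounds -/

lemma edist_adj {W : Type*} {H : SimpleGraph W} {a b : W} (h : H.Adj a b) :
    H.edist a b ≤ 1 := by
  have := SimpleGraph.edist_le (SimpleGraph.Walk.cons h SimpleGraph.Walk.nil)
  simpa using this

lemma edist_desc (hr : 2 ≤ r) (hq : 0 < p v u) :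
    ∀ d, d < cc p r v u →
      (G p r).edist (Sum.inl v)
        (node p r v d (kval p r v u / r ^ (cc p r v u - d))) ≤ (d : ℕ∞) := by
  intro d
  induction d with
  | zero =>
      intro _
      rw [node_d_zero]
      simp
  | succ d ih =>
      intro hd
      have hstep : RelNode p r v (d + 1) (kval p r v u / r ^ (cc p r v u - (d + 1))) :=
        ⟨by omega, u, hq, by omega, rfl⟩
      have hadj := adj_tree hr hstep
      have hdiv : kval p r v u / r ^ (cc p r v u - (d + 1)) / r
          = kval p r v u / r ^ (cc p r v u - d) := by
        rw [Nat.div_div_eq_div_mul, ← pow_succ]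
        congr 2
        omega
      rw [hdiv] at hadj
      calc (G p r).edist (Sum.inl v) _
          ≤ (G p r).edist (Sum.inl v)
              (node p r v d (kval p r v u / r ^ (cc p r v u - d))) +
            (G p r).edist (node p r v d (kval p r v u / r ^ (cc p r v u - d)))
              (node p r v (d + 1) (kval p r v u / r ^ (cc p r v u - (d + 1)))) :=
            SimpleGraph.edist_triangle
      _ ≤ (d : ℕ∞) + 1 := add_le_add (ih (by omega)) (edist_adj hadj)
      _ = ((d + 1 : ℕ) : ℕ∞) := by push_cast; ring

lemma edist_endp (hr : 2 ≤ r) (hq : 0 < p v u) :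
    (G p r).edist (Sum.inl v) (endp p r v u) ≤ ((cc p r v u - 1 : ℕ) : ℕ∞) := by
  have h := edist_desc hr hq (cc p r v u - 1) (by have := (cc_mem hr hq).1; omega)
  rw [(by have := (cc_mem hr hq).1; omega :
    cc p r v u - (cc p r v u - 1) = 1), pow_one] at h
  exact h

lemma edist_pair_le (hr : 2 ≤ r) (hdiag : ∀ v, p v v = 0) (hq : 0 < p v u)
    (hq' : 0 < p u v) :
    (G p r).edist (Sum.inl v) (Sum.inl u) ≤ ((cc p r v u + cc p r u v - 1 : ℕ) : ℕ∞) := by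
  have h1 := edist_endp (p := p) hr hq
  have h3 := edist_endp (p := p) hr hq'
  have h2 : (G p r).edist (endp p r v u) (endp p r u v) ≤ 1 :=
    edist_adj (adj_pair hdiag hq)
  have hc1 := (cc_mem hr hq).1
  have hc2 := (cc_mem hr hq').1
  calc (G p r).edist (Sum.inl v) (Sum.inl u)
      ≤ (G p r).edist (Sum.inl v) (endp p r v u) +
        (G p r).edist (endp p r v u) (Sum.inl u) := SimpleGraph.edist_triangle
  _ ≤ (G p r).edist (Sum.inl v) (endp p r v u) +
      ((G p r).edist (endp p r v u) (endp p r u v) +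
        (G p r).edist (endp p r u v) (Sum.inl u)) := by
        gcongr
        exact SimpleGraph.edist_triangle
  _ ≤ ((cc p r v u - 1 : ℕ) : ℕ∞) + (1 + ((cc p r u v - 1 : ℕ) : ℕ∞)) := by
        gcongr
        rw [SimpleGraph.edist_comm]
        exact h3
  _ = ((cc p r v u + cc p r u v - 1 : ℕ) : ℕ∞) := by
        rw [(by omega : cc p r v u + cc p r u v - 1
          = (cc p r v u - 1) + 1 + (cc p r u v - 1))]
        push_cast
        ring

/-! ### adjacency inversion -/

lemma prod3_eq {a a' : V} {b c b' c' : ℕ}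
    (h : ((a, b, c) : V × ℕ × ℕ) = (a', b', c')) : a = a' ∧ b = b' ∧ c = c' := by
  simpa [Prod.ext_iff] using h

lemma rel_cases {a b : V ⊕ UU p r} (h : Rel p r a b) :
    (∃ v d k, RelNode p r v (d + 1) k ∧ a = node p r v d (k / r) ∧
      b = node p r v (d + 1) k) ∨
    (∃ v u, 0 < p v u ∧ a = endp p r v u ∧ b = endp p r u v) := by
  cases h with
  | tree v d k hk => exact Or.inl ⟨v, d, k, hk, rfl, rfl⟩
  | pair v u hq => exact Or.inr ⟨v, u, hq, rfl, rfl⟩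

lemma node_eq_inl (h : node p r v d k = Sum.inl w) :
    v = w ∧ ¬ RelNode p r v d k := by
  unfold node at h
  split at h
  · exact absurd h (by simp)
  · exact ⟨Sum.inl.inj h, ‹_›⟩

lemma node_eq_inr {y : UU p r} (h : node p r v d k = Sum.inr y) :
    RelNode p r v d k ∧ y.1 = (v, d, k) := by
  unfold node at h
  split at h
  · refine ⟨‹_›, ?_⟩
    have := Sum.inr.inj h
    rw [← this]
  · exact absurd h (by simp)

lemma endp_eq_inl (hr : 2 ≤ r) (hq : 0 < p v u) (h : endp p r v u = Sum.inl w) :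
    v = w ∧ cc p r v u = 1 := by
  obtain ⟨hv, hnot⟩ := node_eq_inl h
  refine ⟨hv, ?_⟩
  have h1 := (cc_mem hr hq).1
  by_contra hcc
  exact hnot (relNode_endp hq (by omega))

/-- full description of the neighbors of a root vertex. -/
lemma adj_inl_inv (hr : 2 ≤ r) (hsym : ∀ a b, p a b = p b a)
    {v : V} {b : V ⊕ UU p r} (hb : (G p r).Adj (Sum.inl v) b) :
    (∃ k, RelNode p r v 1 k ∧ b = node p r v 1 k) ∨
    (∃ u, 0 < p v u ∧ cc p r v u = 1 ∧ b = endp p r u v) := by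
  obtain ⟨hne, hrel | hrel⟩ := hb
  · rcases rel_cases hrel with ⟨v', d, k, hk, ha, hb'⟩ | ⟨v', u', hq, ha, hb'⟩
    · obtain ⟨hv', hnot⟩ := node_eq_inl ha.symm
      subst hv'
      rcases Nat.eq_zero_or_pos d with rfl | hd
      · exact Or.inl ⟨k, hk, hb'⟩
      · exact absurd (relNode_anc hk hd) hnot
    · obtain ⟨hv', hcc⟩ := endp_eq_inl hr hq ha.symm
      subst hv'
      exact Or.inr ⟨u', hq, hcc, hb'⟩
  · rcases rel_cases hrel with ⟨v', d, k, hk, ha, hb'⟩ | ⟨v', u', hq, ha, hb'⟩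
    · exfalso
      obtain ⟨-, hnot⟩ := node_eq_inl hb'.symm
      exact hnot hk
    · obtain ⟨hv', hcc⟩ := endp_eq_inl hr (by rw [hsym]; exact hq) hb'.symm
      subst hv'
      exact Or.inr ⟨v', by rw [hsym]; exact hq, hcc, ha⟩

/-- full description of the neighbors of a Steiner node. -/
lemma adj_inr_inv (hr : 2 ≤ r) (hsym : ∀ a b, p a b = p b a)
    {v : V} {d k : ℕ} {hw : RelNode p r v d k} {b : V ⊕ UU p r}
    (hb : (G p r).Adj (Sum.inr ⟨(v, d, k), hw⟩) b) :
    (b = node p r v (d - 1) (k / r)) ∨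
    (∃ k', RelNode p r v (d + 1) k' ∧ k' / r = k ∧ b = node p r v (d + 1) k') ∨
    (∃ u, 0 < p v u ∧ cc p r v u = d + 1 ∧ kval p r v u / r = k ∧
      b = endp p r u v) := by
  have hd1 : 1 ≤ d := hw.1
  obtain ⟨hne, hrel | hrel⟩ := hb
  · rcases rel_cases hrel with ⟨v', d', k', hk, ha, hb'⟩ | ⟨v', u', hq, ha, hb'⟩
    · obtain ⟨-, hy⟩ := node_eq_inr ha.symm
      obtain ⟨hv', hd', hkk⟩ := prod3_eq hy
      subst hv'
      subst hd'
      subst hkk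
      exact Or.inr (Or.inl ⟨k', hk, rfl, hb'⟩)
    · obtain ⟨-, hy⟩ := node_eq_inr ha.symm
      obtain ⟨hv', hd', hkk⟩ := prod3_eq hy
      subst hv'
      have hcu := (cc_mem hr hq).1
      refine Or.inr (Or.inr ⟨u', hq, by omega, hkk.symm, hb'⟩)
  · rcases rel_cases hrel with ⟨v', d', k', hk, ha, hb'⟩ | ⟨v', u', hq, ha, hb'⟩
    · obtain ⟨-, hy⟩ := node_eq_inr hb'.symm
      obtain ⟨hv', hd', hkk⟩ := prod3_eq hy
      subst hv'
      subst hkk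
      left
      rw [ha, (by omega : d - 1 = d')]
    · obtain ⟨-, hy⟩ := node_eq_inr hb'.symm
      obtain ⟨hv', hd', hkk⟩ := prod3_eq hy
      subst hv'
      have hq' : 0 < p v v' := by rw [hsym]; exact hq
      have hcu := (cc_mem hr hq').1
      exact Or.inr (Or.inr ⟨v', hq', by omega, hkk.symm, ha⟩)

/-! ### degree bounds -/

lemma deg_inl (hr : 2 ≤ r) (hsym : ∀ a b, p a b = p b a) (hdiag : ∀ v, p v v = 0)
    (hnn : ∀ u v, 0 ≤ p u v) (v : V) :
    ((G p r).neighborSet (Sum.inl v)).ncard ≤ r := by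
  classical
  set f : V ⊕ UU p r → ℕ :=
    Sum.elim (fun z => kval p r v z)
      (fun y => if y.1.1 = v then y.1.2.2 else kval p r v y.1.1) with hf
  have hval_tree : ∀ k, RelNode p r v 1 k → f (node p r v 1 k) = k := by
    intro k hk
    rw [node_of_relNode hk, hf]
    show (if v = v then k else kval p r v v) = k
    simp
  have hval_pair : ∀ u, 0 < p v u → f (endp p r u v) = kval p r v u := by
    intro u hq
    have hvu : u ≠ v := by
      rintro rfl
      rw [hdiag] at hq
      exact lt_irrefl _ hq
    unfold endp node
    split
    · rw [hf]
      show (if u = v then _ else kval p r v u) = kval p r v u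
      rw [if_neg hvu]
    · rw [hf]
      simp only [Sum.elim_inl]
  have hsub : ∀ b ∈ (G p r).neighborSet (Sum.inl v), f b < r := by
    intro b hb
    rcases adj_inl_inv hr hsym hb with ⟨k, hk, rfl⟩ | ⟨u, hq, hcc, rfl⟩
    · rw [hval_tree k hk]
      have := relNode_k_lt hr hnn hk
      simpa using this
    · rw [hval_pair u hq]
      have := kval_lt hr hnn hq
      rw [hcc, pow_one] at this
      omega
  have hinj : Set.InjOn f ((G p r).neighborSet (Sum.inl v)) := by
    intro b1 hb1 b2 hb2 heq
    rcases adj_inl_inv hr hsym hb1 with ⟨k1, hk1, rfl⟩ | ⟨u1, hq1, hcc1, rfl⟩ <;>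
      rcases adj_inl_inv hr hsym hb2 with ⟨k2, hk2, rfl⟩ | ⟨u2, hq2, hcc2, rfl⟩
    · rw [hval_tree k1 hk1, hval_tree k2 hk2] at heq
      rw [heq]
    · exfalso
      rw [hval_tree k1 hk1, hval_pair u2 hq2] at heq
      obtain ⟨-, u₂, hq₂, hlt₂, hkk⟩ := hk1
      refine antichain hr hq2 hq₂ (by rintro rfl; omega) (by omega) ?_
      rw [hcc2, ← hkk, ← heq]
    · exfalso
      rw [hval_tree k2 hk2, hval_pair u1 hq1] at heq
      obtain ⟨-, u₂, hq₂, hlt₂, hkk⟩ := hk2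
      refine antichain hr hq1 hq₂ (by rintro rfl; omega) (by omega) ?_
      rw [hcc1, ← hkk, heq]
    · rw [hval_pair u1 hq1, hval_pair u2 hq2] at heq
      by_cases h12 : u1 = u2
      · rw [h12]
      · exact absurd heq (port_ne hr hq1 hq2 h12 (by omega))
  calc ((G p r).neighborSet (Sum.inl v)).ncard
      = (f '' ((G p r).neighborSet (Sum.inl v))).ncard :=
        (Set.ncard_image_of_injOn hinj).symm
  _ ≤ (↑(Finset.range r) : Set ℕ).ncard := by
      apply Set.ncard_le_ncard _ (Finset.finite_toSet _)
      rintro _ ⟨b, hb, rfl⟩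
      simpa [Finset.mem_range] using hsub b hb
  _ = r := by rw [Set.ncard_coe_finset, Finset.card_range]

lemma deg_inr (hr : 2 ≤ r) (hsym : ∀ a b, p a b = p b a) (hdiag : ∀ v, p v v = 0)
    (hnn : ∀ u v, 0 ≤ p u v) (y : UU p r) :
    ((G p r).neighborSet (Sum.inr y)).ncard ≤ r + 1 := by
  classical
  obtain ⟨⟨v, d, k⟩, hw⟩ := y
  have hd1 : 1 ≤ d := hw.1
  set f : V ⊕ UU p r → ℕ :=
    Sum.elim (fun z => if z = v then r else kval p r v z % r)
      (fun y' => if y'.1.1 = v then (if y'.1.2.1 = d + 1 then y'.1.2.2 % r else r)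
        else kval p r v y'.1.1 % r) with hf
  have hval_parent : f (node p r v (d - 1) (k / r)) = r := by
    unfold node
    split
    · rw [hf]
      show (if v = v then (if d - 1 = d + 1 then _ else r) else _) = r
      split_ifs with h1 h2 <;> first | rfl | omega | simp_all
    · rw [hf]
      simp only [Sum.elim_inl]
      split_ifs with h1 <;> first | rfl | simp_all
  have hval_tree : ∀ k', RelNode p r v (d + 1) k' →
      f (node p r v (d + 1) k') = k' % r := by
    intro k' hk
    rw [node_of_relNode hk, hf]
    show (if v = v then (if d + 1 = d + 1 then k' % r else r) else kval p r v v % r) = k' % r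
    simp
  have hval_pair : ∀ u, 0 < p v u → f (endp p r u v) = kval p r v u % r := by
    intro u hq
    have hvu : u ≠ v := by
      rintro rfl
      rw [hdiag] at hq
      exact lt_irrefl _ hq
    unfold endp node
    split
    · rw [hf]
      show (if u = v then _ else kval p r v u % r) = kval p r v u % r
      rw [if_neg hvu]
    · rw [hf]
      simp only [Sum.elim_inl]
      rw [if_neg hvu]
  have hsub : ∀ b ∈ (G p r).neighborSet (Sum.inr ⟨(v, d, k), hw⟩), f b < r + 1 := by
    intro b hb
    rcases adj_inr_inv hr hsym hb with rfl | ⟨k', hk', hdvd, rfl⟩ | ⟨u, hq, hcc, hdvd, rfl⟩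
    · rw [hval_parent]
      omega
    · rw [hval_tree k' hk']
      have := Nat.mod_lt k' (show 0 < r by omega)
      omega
    · rw [hval_pair u hq]
      have := Nat.mod_lt (kval p r v u) (show 0 < r by omega)
      omega
  have hinj : Set.InjOn f ((G p r).neighborSet (Sum.inr ⟨(v, d, k), hw⟩)) := by
    have hmod : ∀ a b : ℕ, a / r = b / r → a % r = b % r → a = b := by
      intro a b h1 h2
      rw [← Nat.div_add_mod a r, ← Nat.div_add_mod b r, h1, h2]
    intro b1 hb1 b2 hb2 heq
    rcases adj_inr_inv hr hsym hb1 with rfl | ⟨k1, hk1, hdvd1, rfl⟩ |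
        ⟨u1, hq1, hcc1, hdvd1, rfl⟩ <;>
      rcases adj_inr_inv hr hsym hb2 with h2 | ⟨k2, hk2, hdvd2, h2⟩ |
        ⟨u2, hq2, hcc2, hdvd2, h2⟩ <;> subst h2
    · rfl
    · exfalso
      rw [hval_parent, hval_tree k2 hk2] at heq
      have := Nat.mod_lt k2 (show 0 < r by omega)
      omega
    · exfalso
      rw [hval_parent, hval_pair u2 hq2] at heq
      have := Nat.mod_lt (kval p r v u2) (show 0 < r by omega)
      omega
    · exfalso
      rw [hval_parent, hval_tree k1 hk1] at heq
      have := Nat.mod_lt k1 (show 0 < r by omega)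
      omega
    · rw [hval_tree k1 hk1, hval_tree k2 hk2] at heq
      rw [hmod k1 k2 (by rw [hdvd1, hdvd2]) heq]
    · exfalso
      rw [hval_tree k1 hk1, hval_pair u2 hq2] at heq
      have hk12 : k1 = kval p r v u2 := hmod _ _ (by rw [hdvd1, hdvd2]) heq
      obtain ⟨-, u₂, hq₂, hlt₂, hkk⟩ := hk1
      refine antichain hr hq2 hq₂ (by rintro rfl; omega) (by omega) ?_
      rw [hcc2, ← hkk, ← hk12]
    · exfalso
      rw [hval_parent, hval_pair u1 hq1] at heq
      have := Nat.mod_lt (kval p r v u1) (show 0 < r by omega)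
      omega
    · exfalso
      rw [hval_tree k2 hk2, hval_pair u1 hq1] at heq
      have hk12 : k2 = kval p r v u1 := hmod _ _ (by rw [hdvd2, hdvd1]) heq.symm
      obtain ⟨-, u₂, hq₂, hlt₂, hkk⟩ := hk2
      refine antichain hr hq1 hq₂ (by rintro rfl; omega) (by omega) ?_
      rw [hcc1, ← hkk, ← hk12]
    · rw [hval_pair u1 hq1, hval_pair u2 hq2] at heq
      have h12 : kval p r v u1 = kval p r v u2 :=
        hmod _ _ (by rw [hdvd1, hdvd2]) heq
      by_cases hu : u1 = u2
      · rw [hu]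
      · exact absurd h12 (port_ne hr hq1 hq2 hu (by omega))
  calc ((G p r).neighborSet (Sum.inr ⟨(v, d, k), hw⟩)).ncard
      = (f '' ((G p r).neighborSet (Sum.inr ⟨(v, d, k), hw⟩))).ncard :=
        (Set.ncard_image_of_injOn hinj).symm
  _ ≤ (↑(Finset.range (r + 1)) : Set ℕ).ncard := by
      apply Set.ncard_le_ncard _ (Finset.finite_toSet _)
      rintro _ ⟨b, hb, rfl⟩
      simpa [Finset.mem_range] using hsub b hb
  _ = r + 1 := by rw [Set.ncard_coe_finset, Finset.card_range]

/-! ### finiteness of the Steiner set -/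

lemma finite_UU : Finite (UU p r) := by
  classical
  set D := Finset.sup (Finset.univ : Finset (V × V)) (fun e => cc p r e.1 e.2) with hD
  have hfin : {x : V × ℕ × ℕ | RelNode p r x.1 x.2.1 x.2.2}.Finite := by
    apply Set.Finite.subset (Set.Finite.image
      (f := fun t : (V × V) × ℕ =>
        ((t.1.1, t.2, kval p r t.1.1 t.1.2 / r ^ (cc p r t.1.1 t.1.2 - t.2)) : V × ℕ × ℕ))
      (Set.Finite.prod Set.finite_univ (Set.finite_Iic D)))
    rintro ⟨v, d, k⟩ ⟨hd, u, hq, hlt, hk⟩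
    simp only at hd hq hlt hk
    refine ⟨((v, u), d), ⟨Set.mem_univ _, ?_⟩, ?_⟩
    · simp only [Set.mem_Iic]
      calc d ≤ cc p r v u := by omega
      _ ≤ D := Finset.le_sup (f := fun e : V × V => cc p r e.1 e.2)
          (Finset.mem_univ (v, u))
    · simp only
      rw [← hk]
  exact hfin.to_subtype

/-! ### rewriting the conditional entropy sum -/

lemma ces_eq (hnn : ∀ u v, 0 ≤ p u v) :
    condEntropySum r p =
      ∑ v, ∑ u, (if 0 < p v u then
        p v u * Real.logb r (marginal p v / p v u) else 0) := by
  classical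
  unfold condEntropySum entropyBase
  apply Finset.sum_congr rfl
  intro v _
  by_cases hP : 0 < marginal p v
  · rw [if_pos hP, Finset.mul_sum]
    apply Finset.sum_congr rfl
    intro u _
    by_cases hq : 0 < p v u
    · have hcond : 0 < p v u / marginal p v := div_pos hq hP
      rw [if_pos hcond, if_pos hq, one_div_div]
      field_simp
    · have hq0 : p v u = 0 := le_antisymm (not_lt.1 hq) (hnn v u)
      rw [if_neg hq]
      simp [hq0]
  · rw [if_neg hP]
    have hall : ∀ u, p v u = 0 := by
      have h0 : marginal p v = 0 :=
        le_antisymm (not_lt.1 hP) (marginal_nonneg hnn v)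
      intro u
      have := (Finset.sum_eq_zero_iff_of_nonneg
        (fun w _ => hnn v w)).1 h0 u (Finset.mem_univ u)
      exact this
    symm
    apply Finset.sum_eq_zero
    intro u _
    rw [hall u]
    simp

lemma ces_nonneg (hr : 2 ≤ r) (hnn : ∀ u v, 0 ≤ p u v) :
    0 ≤ condEntropySum r p := by
  rw [ces_eq hnn]
  apply Finset.sum_nonneg
  intro v _
  apply Finset.sum_nonneg
  intro u _
  split_ifs with hq
  · have h1r : (1 : ℝ) < r := by exact_mod_cast hr
    apply mul_nonneg hq.le
    apply Real.logb_nonneg h1r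
    rw [le_div_iff₀ hq]
    simpa using le_marginal hnn v u
  · exact le_refl 0

end lemmas

end DAN

/-- there is a host graph with Steiner nodes (a finite set `U` disjoint
from `V`, realized as the right summand of `V ⊕ U`), of maximum degree at most `Δ`,
whose expected path length is at most `Σ_{v, p(v)>0} p(v)·H_{Δ−1}(p_v) + 1`. -/
theorem statement_0 {V : Type} [Fintype V] (n : ℕ) (hn : Fintype.card V = n) (hn2 : 2 ≤ n)
    (p : V → V → ℝ) (hp : IsDemandDistribution p) (Δ : ℕ) (hΔ : 3 ≤ Δ) :
    ∃ (U : Type) (_ : Fintype U) (G : SimpleGraph (V ⊕ U)),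
      (∀ w : V ⊕ U, (G.neighborSet w).ncard ≤ Δ) ∧
      expectedPathLength p G Sum.inl ≤
        ENNReal.ofReal (condEntropySum (Δ - 1) p + 1) := by
  classical
  obtain ⟨hsym, hdiag, hnn, hle1, hsum⟩ := hp
  set r := Δ - 1 with hrdef
  have hr : 2 ≤ r := by omega
  have hfin : Finite (DAN.UU p r) := DAN.finite_UU
  refine ⟨DAN.UU p r, Fintype.ofFinite _, DAN.G p r, ?_, ?_⟩
  · intro w
    cases w with
    | inl v => exact le_trans (DAN.deg_inl hr hsym hdiag hnn v) (by omega)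
    | inr y => exact le_trans (DAN.deg_inr hr hsym hdiag hnn y) (by omega)
  · have h1r : (1 : ℝ) < r := by exact_mod_cast hr
    set g : V → V → ℝ := fun u v =>
      if 0 < p u v then
        p u v * (Real.logb r (marginal p u / p u v) +
          Real.logb r (marginal p v / p u v) + 1) else 0 with hg
    have hg0 : ∀ u v, 0 ≤ g u v := by
      intro u v
      simp only [hg]
      split_ifs with hq
      · have l1 : 0 ≤ Real.logb r (marginal p u / p u v) := by
          apply Real.logb_nonneg h1r
          rw [le_div_iff₀ hq, one_mul]
          exact DAN.le_marginal hnn u v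
        have l2 : 0 ≤ Real.logb r (marginal p v / p u v) := by
          apply Real.logb_nonneg h1r
          rw [le_div_iff₀ hq, one_mul, hsym u v]
          exact DAN.le_marginal hnn v u
        nlinarith
      · exact le_refl 0
    have hkey : ∀ u v : V, ENNReal.ofReal (p u v) *
        ((DAN.G p r).edist (Sum.inl u) (Sum.inl v) : ℝ≥0∞) ≤ ENNReal.ofReal (g u v) := by
      intro u v
      by_cases hq : 0 < p u v
      · have hq' : 0 < p v u := by rw [hsym]; exact hq
        have hdist := DAN.edist_pair_le hr hdiag hq hq'
        set N : ℕ := DAN.cc p r u v + DAN.cc p r v u - 1 with hN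
        have hdist2 : ((DAN.G p r).edist (Sum.inl u) (Sum.inl v) : ℝ≥0∞) ≤ (N : ℝ≥0∞) := by
          have h2 := ENat.toENNReal_le.2 hdist
          rwa [ENat.toENNReal_coe] at h2
        have hc1 := DAN.cc_le_logb hr hnn hq
        have hc2 := DAN.cc_le_logb hr hnn hq'
        rw [hsym v u] at hc2
        have hc1' := (DAN.cc_mem hr hq).1
        have hc2' := (DAN.cc_mem hr hq').1
        have hNle : (N : ℝ) ≤ Real.logb r (marginal p u / p u v) +
            Real.logb r (marginal p v / p u v) + 1 := by
          have hcast : (N : ℝ) = (DAN.cc p r u v : ℝ) + (DAN.cc p r v u : ℝ) - 1 := by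
            rw [hN]
            push_cast [Nat.cast_sub (by omega : 1 ≤ DAN.cc p r u v + DAN.cc p r v u)]
            ring
          rw [hcast]
          linarith
        calc ENNReal.ofReal (p u v) *
            ((DAN.G p r).edist (Sum.inl u) (Sum.inl v) : ℝ≥0∞)
            ≤ ENNReal.ofReal (p u v) * (N : ℝ≥0∞) := mul_le_mul_right hdist2 _
        _ = ENNReal.ofReal (p u v * N) := by
            rw [← ENNReal.ofReal_natCast N, ← ENNReal.ofReal_mul hq.le]
        _ ≤ ENNReal.ofReal (g u v) := by
            apply ENNReal.ofReal_le_ofReal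
            simp only [hg]
            rw [if_pos hq]
            exact mul_le_mul_of_nonneg_left hNle hq.le
      · have hq0 : p u v = 0 := le_antisymm (not_lt.1 hq) (hnn u v)
        rw [hq0]
        simp
    unfold expectedPathLength
    have hsum1 : ∑ u, ∑ v, ENNReal.ofReal (p u v) *
        ((DAN.G p r).edist (Sum.inl u) (Sum.inl v) : ℝ≥0∞) ≤
        ENNReal.ofReal (∑ u, ∑ v, g u v) := by
      calc ∑ u, ∑ v, ENNReal.ofReal (p u v) *
            ((DAN.G p r).edist (Sum.inl u) (Sum.inl v) : ℝ≥0∞)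
          ≤ ∑ u, ∑ v, ENNReal.ofReal (g u v) :=
            Finset.sum_le_sum (fun u _ => Finset.sum_le_sum (fun v _ => hkey u v))
      _ = ∑ u : V, ENNReal.ofReal (∑ v, g u v) := by
            apply Finset.sum_congr rfl
            intro u _
            rw [ENNReal.ofReal_sum_of_nonneg (fun v _ => hg0 u v)]
      _ = ENNReal.ofReal (∑ u, ∑ v, g u v) := by
            rw [ENNReal.ofReal_sum_of_nonneg
              (fun u _ => Finset.sum_nonneg (fun v _ => hg0 u v))]
    have hgsum : ∑ u, ∑ v, g u v = 2 * (condEntropySum r p + 1) := by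
      have hsplit : ∀ u v : V, g u v =
          (if 0 < p u v then p u v * Real.logb r (marginal p u / p u v) else 0) +
          ((if 0 < p u v then p u v * Real.logb r (marginal p v / p u v) else 0) +
           (if 0 < p u v then p u v else 0)) := by
        intro u v
        simp only [hg]
        split_ifs with hq
        · ring
        · ring
      simp_rw [hsplit, Finset.sum_add_distrib]
      have e1 : ∑ u : V, ∑ v : V,
          (if 0 < p u v then p u v * Real.logb r (marginal p u / p u v) else 0)
          = condEntropySum r p := (DAN.ces_eq hnn).symm
      have e2 : ∑ u : V, ∑ v : V,
          (if 0 < p u v then p u v * Real.logb r (marginal p v / p u v) else 0)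
          = condEntropySum r p := by
        rw [Finset.sum_comm]
        calc ∑ v : V, ∑ u : V,
            (if 0 < p u v then p u v * Real.logb r (marginal p v / p u v) else 0)
            = ∑ v : V, ∑ u : V,
              (if 0 < p v u then p v u * Real.logb r (marginal p v / p v u) else 0) := by
              apply Finset.sum_congr rfl
              intro v _
              apply Finset.sum_congr rfl
              intro u _
              rw [hsym u v]
        _ = condEntropySum r p := (DAN.ces_eq hnn).symm
      have e3 : ∑ u : V, ∑ v : V, (if 0 < p u v then p u v else 0) = 2 := by
        calc ∑ u : V, ∑ v : V, (if 0 < p u v then p u v else 0)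
            = ∑ u : V, ∑ v : V, p u v := by
              apply Finset.sum_congr rfl
              intro u _
              apply Finset.sum_congr rfl
              intro v _
              split_ifs with hq
              · rfl
              · exact (le_antisymm (not_lt.1 hq) (hnn u v)).symm
        _ = 2 := hsum
      rw [e1, e2, e3]
      ring
    calc (1 / 2 : ℝ≥0∞) * ∑ u, ∑ v, ENNReal.ofReal (p u v) *
          ((DAN.G p r).edist (Sum.inl u) (Sum.inl v) : ℝ≥0∞)
        ≤ (1 / 2 : ℝ≥0∞) * ENNReal.ofReal (∑ u, ∑ v, g u v) := mul_le_mul_right hsum1 _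
    _ = ENNReal.ofReal (condEntropySum r p + 1) := by
        rw [hgsum, ENNReal.ofReal_mul (by norm_num : (0:ℝ) ≤ 2), ENNReal.ofReal_ofNat,
          one_div, ← mul_assoc, ENNReal.inv_mul_cancel (by norm_num) (by norm_num), one_mul]
end

section
/- Let V be a finite set, let p be a demand distribution on V, and let Δ ≥ 1 be an integer. Then for every finite simple graph G of maximum degree at most Δ whose vertex set contains V, the expected path length satisfies Σ_{{u,v} ⊆ V} p({u,v})·d_G(u,v) ≥ (1/2)·Σ_{v ∈ V, p(v) > 0} p(v)·H_{Δ+1}(p_v) − 1. -/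
open scoped ENNReal BigOperators

/-- If `edist w u = r+1` then `u` has a neighbor at distance exactly `r` from `w`. -/
lemma aux_exists_pred {W : Type} (G : SimpleGraph W) {w u : W} {r : ℕ}
    (h : G.edist w u = ((r + 1 : ℕ) : ℕ∞)) : ∃ x, G.edist w x = (r : ℕ∞) ∧ G.Adj x u := by
  have h' : G.edist u w = ((r + 1 : ℕ) : ℕ∞) := by rw [SimpleGraph.edist_comm]; exact h
  obtain ⟨p, hp⟩ := SimpleGraph.exists_walk_of_edist_eq_coe h'
  cases p with
  | nil => simp at hp
  | @cons _ x _ hadj q =>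
    refine ⟨x, ?_, hadj.symm⟩
    have hq : q.length = r := by
      simpa [SimpleGraph.Walk.length_cons] using hp
    have hle : G.edist w x ≤ (r : ℕ∞) := by
      rw [SimpleGraph.edist_comm]
      simpa [hq] using SimpleGraph.edist_le q
    have hge : (r : ℕ∞) ≤ G.edist w x := by
      by_contra hlt
      push_neg at hlt
      have hfin : G.edist w x ≠ ⊤ := (hlt.trans_le le_top).ne
      have h1 : G.edist w x + 1 ≤ (r : ℕ∞) := (ENat.add_one_le_iff hfin).mpr hlt
      have htri : G.edist w u ≤ G.edist w x + G.edist x u := G.edist_triangle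
      have hxu : G.edist x u ≤ 1 := by
        simpa using SimpleGraph.edist_le hadj.symm.toWalk
      have : G.edist w u ≤ (r : ℕ∞) :=
        htri.trans ((add_le_add le_rfl hxu).trans h1)
      rw [h] at this
      have h2 : ((r + 1 : ℕ) : ℕ∞) ≤ ((r : ℕ) : ℕ∞) := by
        push_cast
        exact this
      exact absurd (Nat.cast_le.mp h2) (by omega)
    exact le_antisymm hle hge

/-- Sphere-counting: at most `Δ^r` vertices at distance exactly `r`. -/
lemma sphere_card_le {W : Type} [Fintype W] (G : SimpleGraph W) (Δ : ℕ)
    (hdeg : ∀ w : W, (G.neighborSet w).ncard ≤ Δ) (w : W) :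
    ∀ r : ℕ, (Finset.univ.filter (fun u : W => G.edist w u = (r : ℕ∞))).card ≤ Δ ^ r := by
  classical
  intro r
  induction r with
  | zero =>
    have hsub : (Finset.univ.filter (fun u : W => G.edist w u = ((0 : ℕ) : ℕ∞))) ⊆ {w} := by
      intro u hu
      simp only [Finset.mem_filter, Finset.mem_univ, true_and, Nat.cast_zero,
        SimpleGraph.edist_eq_zero_iff] at hu
      simp [hu.symm]
    simpa using (Finset.card_le_card hsub).trans (by simp)
  | succ r ih =>
    set S : Finset W := Finset.univ.filter (fun u : W => G.edist w u = (r : ℕ∞)) with hS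
    have hsub : (Finset.univ.filter (fun u : W => G.edist w u = ((r + 1 : ℕ) : ℕ∞))) ⊆
        S.biUnion (fun x => (G.neighborSet x).toFinset) := by
      intro u hu
      simp only [Finset.mem_filter, Finset.mem_univ, true_and] at hu
      obtain ⟨x, hx, hadj⟩ := aux_exists_pred G hu
      refine Finset.mem_biUnion.mpr ⟨x, ?_, ?_⟩
      · simp [hS, hx]
      · simp [SimpleGraph.mem_neighborSet, hadj]
    calc (Finset.univ.filter (fun u : W => G.edist w u = ((r + 1 : ℕ) : ℕ∞))).card
        ≤ (S.biUnion (fun x => (G.neighborSet x).toFinset)).card := Finset.card_le_card hsub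
      _ ≤ ∑ x ∈ S, ((G.neighborSet x).toFinset).card := Finset.card_biUnion_le
      _ ≤ ∑ _x ∈ S, Δ := by
          refine Finset.sum_le_sum fun x _ => ?_
          have := hdeg x
          rwa [Set.ncard_eq_toFinset_card'] at this
      _ = S.card * Δ := by simp [Finset.sum_const, Nat.smul_one_eq_cast, mul_comm]
      _ ≤ Δ ^ r * Δ := by exact Nat.mul_le_mul_right Δ ih
      _ = Δ ^ (r + 1) := (pow_succ Δ r).symm

/-- Geometric sum bound: `∑_{r=1}^{M} (Δ/(Δ+1))^r ≤ Δ`. -/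
lemma geom_Icc_le (Δ : ℕ) (hΔ : 1 ≤ Δ) (M : ℕ) :
    ∑ r ∈ Finset.Icc 1 M, ((Δ : ℝ) / (Δ + 1)) ^ r ≤ (Δ : ℝ) := by
  set x : ℝ := (Δ : ℝ) / (Δ + 1) with hx
  have hΔ1 : (0 : ℝ) < (Δ : ℝ) + 1 := by positivity
  have hkey : x * ((Δ : ℝ) + 1) = Δ := by rw [hx, div_mul_cancel₀ _ hΔ1.ne']
  have hx0 : 0 ≤ x := by positivity
  have main : ∀ M : ℕ, ∑ r ∈ Finset.Icc 1 M, x ^ r ≤ (Δ : ℝ) * (1 - x ^ M) := by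
    intro M
    induction M with
    | zero => simp
    | succ M ih =>
      rw [Finset.sum_Icc_succ_top (by omega : 1 ≤ M + 1)]
      have hxM : (0 : ℝ) ≤ x ^ M := pow_nonneg hx0 M
      have h1 : x ^ (M + 1) = x ^ M * x := pow_succ x M
      nlinarith [ih]
  have hM := main M
  have : (Δ : ℝ) * (1 - x ^ M) ≤ Δ := by
    have hxM : (0 : ℝ) ≤ x ^ M := pow_nonneg hx0 M
    nlinarith
  linarith

/-- Kraft-type inequality for points embedded in a bounded-degree graph. -/
lemma kraft_bound {V W : Type} [Fintype V] [Fintype W] (G : SimpleGraph W) (Δ : ℕ)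
    (hΔ : 1 ≤ Δ) (hdeg : ∀ w : W, (G.neighborSet w).ncard ≤ Δ) (ι : V ↪ W) (w : W)
    (s : Finset V) (d : V → ℕ)
    (hd : ∀ u ∈ s, G.edist w (ι u) = (d u : ℕ∞)) (h1 : ∀ u ∈ s, 1 ≤ d u) :
    ∑ u ∈ s, (((Δ : ℝ) + 1) ^ d u)⁻¹ ≤ (Δ : ℝ) := by
  classical
  set t : Finset ℕ := s.image d with ht
  have hfib : ∑ r ∈ t, ∑ u ∈ s.filter (fun u => d u = r), (((Δ : ℝ) + 1) ^ d u)⁻¹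
      = ∑ u ∈ s, (((Δ : ℝ) + 1) ^ d u)⁻¹ :=
    Finset.sum_fiberwise_of_maps_to (fun u hu => Finset.mem_image_of_mem d hu) _
  rw [← hfib]
  have hcard : ∀ r : ℕ, (s.filter (fun u => d u = r)).card ≤ Δ ^ r := by
    intro r
    have hinj : ∀ u ∈ s.filter (fun u => d u = r), ι u ∈
        Finset.univ.filter (fun x : W => G.edist w x = (r : ℕ∞)) := by
      intro u hu
      simp only [Finset.mem_filter, Finset.mem_univ, true_and] at hu ⊢
      rw [hd u hu.1, hu.2]
    have := Finset.card_le_card_of_injOn ι hinj (fun a _ b _ hab => ι.injective hab)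
    exact this.trans (sphere_card_le G Δ hdeg w r)
  have hterm : ∀ r ∈ t, ∑ u ∈ s.filter (fun u => d u = r), (((Δ : ℝ) + 1) ^ d u)⁻¹
      ≤ ((Δ : ℝ) / (Δ + 1)) ^ r := by
    intro r _
    have heq : ∑ u ∈ s.filter (fun u => d u = r), (((Δ : ℝ) + 1) ^ d u)⁻¹
        = (s.filter (fun u => d u = r)).card * (((Δ : ℝ) + 1) ^ r)⁻¹ := by
      rw [Finset.sum_congr rfl (fun u hu => ?_), Finset.sum_const, nsmul_eq_mul]
      rw [(Finset.mem_filter.mp hu).2]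
    rw [heq, div_pow, div_eq_mul_inv]
    have h2 : ((s.filter (fun u => d u = r)).card : ℝ) ≤ ((Δ : ℝ) ^ r) := by
      have := hcard r
      calc ((s.filter (fun u => d u = r)).card : ℝ) ≤ ((Δ ^ r : ℕ) : ℝ) := by
            exact_mod_cast this
        _ = (Δ : ℝ) ^ r := by push_cast; ring
    have hpos : (0 : ℝ) ≤ (((Δ : ℝ) + 1) ^ r)⁻¹ := by positivity
    exact mul_le_mul_of_nonneg_right h2 hpos
  have hsubset : t ⊆ Finset.Icc 1 (s.sup d) := by
    intro r hr
    obtain ⟨u, hu, rfl⟩ := Finset.mem_image.mp hr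
    exact Finset.mem_Icc.mpr ⟨h1 u hu, Finset.le_sup hu⟩
  calc ∑ r ∈ t, ∑ u ∈ s.filter (fun u => d u = r), (((Δ : ℝ) + 1) ^ d u)⁻¹
      ≤ ∑ r ∈ t, ((Δ : ℝ) / (Δ + 1)) ^ r := Finset.sum_le_sum hterm
    _ ≤ ∑ r ∈ Finset.Icc 1 (s.sup d), ((Δ : ℝ) / (Δ + 1)) ^ r := by
        refine Finset.sum_le_sum_of_subset_of_nonneg hsubset fun r _ _ => by positivity
    _ ≤ (Δ : ℝ) := geom_Icc_le Δ hΔ (s.sup d)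

/-- Per-vertex entropy bound: if the support satisfies the Kraft condition then the
entropy is at most the expected distance plus one. -/
lemma entropy_le_expected {V : Type} [Fintype V] (Δ : ℕ) (hΔ : 1 ≤ Δ)
    (q : V → ℝ) (d : V → ℕ) (hq0 : ∀ u, 0 ≤ q u) (hq1 : ∑ u, q u = 1)
    (hkraft : ∑ u ∈ Finset.univ.filter (fun u => 0 < q u),
      (((Δ : ℝ) + 1) ^ d u)⁻¹ ≤ (Δ : ℝ)) :
    entropyBase (Δ + 1) q ≤ (∑ u, q u * d u) + 1 := by
  classical
  set D : ℝ := (Δ : ℝ) + 1 with hD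
  have hD1 : 1 < D := by
    have : (1 : ℝ) ≤ (Δ : ℝ) := by exact_mod_cast hΔ
    linarith
  have hD0 : 0 < D := by linarith
  have hbase : ((Δ + 1 : ℕ) : ℝ) = D := by push_cast [hD]; ring
  set s : Finset V := Finset.univ.filter (fun u => 0 < q u) with hs
  have hsum_s : ∑ u ∈ s, q u = 1 := by
    rw [← hq1]
    refine Finset.sum_subset (Finset.subset_univ s) fun u _ hu => ?_
    simp only [hs, Finset.mem_filter, Finset.mem_univ, true_and, not_lt] at hu
    linarith [hq0 u]
  have hsne : s.Nonempty := by
    by_contra h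
    rw [Finset.not_nonempty_iff_eq_empty] at h
    rw [h] at hsum_s
    simp at hsum_s
  -- entropy as sum over support
  have hent : entropyBase (Δ + 1) q = ∑ u ∈ s, q u * Real.logb D (1 / q u) := by
    rw [entropyBase, ← Finset.sum_filter, hbase]
  -- decompose the log
  set c : V → ℝ := fun u => (D ^ d u)⁻¹ with hc
  have hcpos : ∀ u, 0 < c u := fun u => by positivity
  have hlogc : ∀ u, Real.logb D (c u) = -(d u : ℝ) := by
    intro u
    rw [hc]
    simp only
    rw [Real.logb_inv, Real.logb_pow, Real.logb_self_eq_one hD1]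
    ring
  have hsplit : ∀ u ∈ s, q u * Real.logb D (1 / q u)
      = q u * Real.logb D (c u / q u) + q u * (d u : ℝ) := by
    intro u hu
    have hqu : 0 < q u := by
      simpa [hs] using (Finset.mem_filter.mp hu).2
    have h1 : Real.logb D (c u / q u) = Real.logb D (c u) - Real.logb D (q u) :=
      Real.logb_div (hcpos u).ne' hqu.ne'
    have h2 : Real.logb D (1 / q u) = - Real.logb D (q u) := by
      rw [one_div, Real.logb_inv]
    rw [h1, h2, hlogc u]; ring
  rw [hent, Finset.sum_congr rfl hsplit, Finset.sum_add_distrib]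
  have hB : ∑ u ∈ s, q u * (d u : ℝ) ≤ ∑ u, q u * (d u : ℝ) := by
    refine Finset.sum_le_sum_of_subset_of_nonneg (Finset.subset_univ s) fun u _ _ => ?_
    exact mul_nonneg (hq0 u) (by positivity)
  have hA : ∑ u ∈ s, q u * Real.logb D (c u / q u) ≤ 1 := by
    -- Jensen
    have hqpos : ∀ u ∈ s, 0 < q u := fun u hu => by
      simpa [hs] using (Finset.mem_filter.mp hu).2
    have hmem : ∀ u ∈ s, c u / q u ∈ Set.Ioi (0 : ℝ) := fun u hu =>
      Set.mem_Ioi.mpr (div_pos (hcpos u) (hqpos u hu))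
    have hjensen := (strictConcaveOn_log_Ioi.concaveOn).le_map_sum
      (fun u hu => (hqpos u hu).le) hsum_s hmem
    have hval : ∑ u ∈ s, q u • (c u / q u) = ∑ u ∈ s, c u := by
      refine Finset.sum_congr rfl fun u hu => ?_
      rw [smul_eq_mul, mul_div_cancel₀ _ (hqpos u hu).ne']
    have hcsum_pos : 0 < ∑ u ∈ s, c u :=
      Finset.sum_pos (fun u _ => hcpos u) hsne
    have hcsum_le : ∑ u ∈ s, c u ≤ (Δ : ℝ) := by
      simpa [hc, hD, hs] using hkraft
    have hlog : Real.log (∑ u ∈ s, q u • (c u / q u)) ≤ Real.log (Δ : ℝ) := by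
      rw [hval]
      exact Real.log_le_log hcsum_pos hcsum_le
    have hsum_log : ∑ u ∈ s, q u * Real.log (c u / q u) ≤ Real.log (Δ : ℝ) := by
      calc ∑ u ∈ s, q u * Real.log (c u / q u)
          = ∑ u ∈ s, q u • Real.log (c u / q u) := by simp [smul_eq_mul]
        _ ≤ Real.log (∑ u ∈ s, q u • (c u / q u)) := hjensen
        _ ≤ Real.log (Δ : ℝ) := hlog
    have hlogD : 0 < Real.log D := Real.log_pos hD1
    have : ∑ u ∈ s, q u * Real.logb D (c u / q u)
        = (∑ u ∈ s, q u * Real.log (c u / q u)) / Real.log D := by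
      rw [Finset.sum_div]
      exact Finset.sum_congr rfl fun u _ => by rw [Real.logb, mul_div_assoc]
    rw [this]
    have hΔD : Real.log (Δ : ℝ) ≤ Real.log D := by
      have hΔpos : (0 : ℝ) < (Δ : ℝ) := by exact_mod_cast hΔ
      exact Real.log_le_log hΔpos (by linarith)
    calc (∑ u ∈ s, q u * Real.log (c u / q u)) / Real.log D
        ≤ Real.log (Δ : ℝ) / Real.log D := by
          exact div_le_div_of_nonneg_right hsum_log hlogD.le |>.trans_eq rfl
      _ ≤ Real.log D / Real.log D := by
          exact div_le_div_of_nonneg_right hΔD hlogD.le |>.trans_eq rfl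
      _ = 1 := div_self hlogD.ne'
  linarith

/-- entropy lower bound on the expected path length of any bounded-degree
host graph (possibly with Steiner nodes). -/
theorem statement_3 {V : Type} [Fintype V] (p : V → V → ℝ)
    (hp : IsDemandDistribution p) (Δ : ℕ) (hΔ : 1 ≤ Δ)
    (W : Type) [Fintype W] (G : SimpleGraph W) (ι : V ↪ W)
    (hdeg : ∀ w : W, (G.neighborSet w).ncard ≤ Δ) :
    ENNReal.ofReal ((1 / 2) * condEntropySum (Δ + 1) p - 1) ≤
      expectedPathLength p G ι := by
  classical
  obtain ⟨hsymm, hdiag, hnn, hle1, hsum2⟩ := hp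
  by_cases hfin : ∀ u v : V, 0 < p u v → G.edist (ι u) (ι v) ≠ ⊤
  · -- all demanded pairs are connected
    set dN : V → V → ℕ := fun u v => (G.edist (ι u) (ι v)).toNat with hdN
    have hedist : ∀ u v : V, 0 < p u v → G.edist (ι u) (ι v) = (dN u v : ℕ∞) := by
      intro u v huv
      exact (ENat.coe_toNat (hfin u v huv)).symm
    -- Step 1: real inequality
    have hstep1 : condEntropySum (Δ + 1) p ≤ (∑ u, ∑ v, p u v * (dN u v : ℝ)) + 2 := by
      have hterm : ∀ v : V,
          (if 0 < marginal p v then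
            marginal p v * entropyBase (Δ + 1) (fun u => p v u / marginal p v) else 0)
          ≤ (∑ u, p v u * (dN v u : ℝ)) + marginal p v := by
        intro v
        have hnn' : ∀ u, 0 ≤ p v u * (dN v u : ℝ) := fun u =>
          mul_nonneg (hnn v u) (by positivity)
        by_cases hm : 0 < marginal p v
        · rw [if_pos hm]
          set q : V → ℝ := fun u => p v u / marginal p v with hq
          have hq0 : ∀ u, 0 ≤ q u := fun u => div_nonneg (hnn v u) hm.le
          have hq1 : ∑ u, q u = 1 := by
            rw [hq]
            simp only
            rw [← Finset.sum_div]
            exact div_self hm.ne'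
          have hqpos_iff : ∀ u, 0 < q u ↔ 0 < p v u := by
            intro u
            constructor
            · intro h
              by_contra hc
              push_neg at hc
              have : p v u = 0 := le_antisymm hc (hnn v u)
              rw [hq] at h; simp only at h
              rw [this] at h; simp at h
            · intro h; exact div_pos h hm
          have hkraft : ∑ u ∈ Finset.univ.filter (fun u => 0 < q u),
              (((Δ : ℝ) + 1) ^ dN v u)⁻¹ ≤ (Δ : ℝ) := by
            refine kraft_bound G Δ hΔ hdeg ι (ι v) _ (dN v) ?_ ?_
            · intro u hu
              have hpu : 0 < p v u := (hqpos_iff u).mp (Finset.mem_filter.mp hu).2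
              exact hedist v u hpu
            · intro u hu
              have hpu : 0 < p v u := (hqpos_iff u).mp (Finset.mem_filter.mp hu).2
              have huv : u ≠ v := by
                intro h; rw [h] at hpu; rw [hdiag v] at hpu; exact lt_irrefl 0 hpu
              have hne : G.edist (ι v) (ι u) ≠ 0 := by
                rw [SimpleGraph.edist_eq_zero_iff.ne]
                exact fun h => huv (ι.injective h.symm)
              have : dN v u ≠ 0 := by
                intro h0
                apply hne
                have := hedist v u hpu
                rw [this, h0]; simp
              omega
          have hent := entropy_le_expected Δ hΔ q (dN v) hq0 hq1 hkraft
          have := mul_le_mul_of_nonneg_left hent hm.le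
          calc marginal p v * entropyBase (Δ + 1) q
              ≤ marginal p v * ((∑ u, q u * (dN v u : ℝ)) + 1) := this
            _ = (∑ u, p v u * (dN v u : ℝ)) + marginal p v := by
                rw [mul_add, mul_one, Finset.mul_sum]
                congr 1
                refine Finset.sum_congr rfl fun u _ => ?_
                rw [hq]; simp only
                field_simp
            _ ≤ (∑ u, p v u * (dN v u : ℝ)) + marginal p v := le_refl _
        · rw [if_neg hm]
          have hm0 : 0 ≤ marginal p v := Finset.sum_nonneg fun u _ => hnn v u
          have : 0 ≤ ∑ u, p v u * (dN v u : ℝ) := Finset.sum_nonneg fun u _ => hnn' u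
          linarith
      have hmarg : ∑ v, marginal p v = 2 := by
        rw [← hsum2]
        rfl
      calc condEntropySum (Δ + 1) p
          ≤ ∑ v, ((∑ u, p v u * (dN v u : ℝ)) + marginal p v) :=
            Finset.sum_le_sum fun v _ => hterm v
        _ = (∑ v, ∑ u, p v u * (dN v u : ℝ)) + ∑ v, marginal p v :=
            Finset.sum_add_distrib
        _ = (∑ u, ∑ v, p u v * (dN u v : ℝ)) + 2 := by rw [hmarg]
    -- Step 2: pass to ℝ≥0∞
    have hS_nonneg : 0 ≤ ∑ u, ∑ v, p u v * (dN u v : ℝ) :=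
      Finset.sum_nonneg fun u _ => Finset.sum_nonneg fun v _ =>
        mul_nonneg (hnn u v) (by positivity)
    have hreal : (1 / 2) * condEntropySum (Δ + 1) p - 1
        ≤ (1 / 2) * (∑ u, ∑ v, p u v * (dN u v : ℝ)) := by linarith
    refine (ENNReal.ofReal_le_ofReal hreal).trans ?_
    rw [expectedPathLength]
    have hhalf : ENNReal.ofReal ((1 / 2) * (∑ u, ∑ v, p u v * (dN u v : ℝ)))
        = ENNReal.ofReal (1 / 2) * ENNReal.ofReal (∑ u, ∑ v, p u v * (dN u v : ℝ)) :=
      ENNReal.ofReal_mul (by norm_num)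
    rw [hhalf]
    have hhalf2 : ENNReal.ofReal (1 / 2 : ℝ) = (1 / 2 : ℝ≥0∞) := by
      rw [ENNReal.ofReal_div_of_pos (by norm_num)]
      norm_num
    rw [hhalf2]
    refine mul_le_mul_right ?_ _
    calc ENNReal.ofReal (∑ u, ∑ v, p u v * (dN u v : ℝ))
        = ∑ u, ENNReal.ofReal (∑ v, p u v * (dN u v : ℝ)) := by
          rw [ENNReal.ofReal_sum_of_nonneg]
          intro u _
          exact Finset.sum_nonneg fun v _ => mul_nonneg (hnn u v) (by positivity)
      _ = ∑ u, ∑ v, ENNReal.ofReal (p u v * (dN u v : ℝ)) := by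
          refine Finset.sum_congr rfl fun u _ => ?_
          rw [ENNReal.ofReal_sum_of_nonneg]
          intro v _
          exact mul_nonneg (hnn u v) (by positivity)
      _ ≤ ∑ u, ∑ v, ENNReal.ofReal (p u v) * (G.edist (ι u) (ι v) : ℝ≥0∞) := by
          refine Finset.sum_le_sum fun u _ => Finset.sum_le_sum fun v _ => ?_
          rcases eq_or_lt_of_le (hnn u v) with h | h
          · rw [← h]; simp
          · rw [ENNReal.ofReal_mul (hnn u v), hedist u v h]
            rw [ENat.toENNReal_coe, ENNReal.ofReal_natCast]
  · -- some demanded pair is disconnected: RHS is ⊤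
    push_neg at hfin
    obtain ⟨u, v, hpuv, htop⟩ := hfin
    have : expectedPathLength p G ι = ⊤ := by
      rw [expectedPathLength]
      have hterm : ENNReal.ofReal (p u v) * (G.edist (ι u) (ι v) : ℝ≥0∞) = ⊤ := by
        rw [htop, ENat.toENNReal_top]
        exact ENNReal.mul_top (by simp [ENNReal.ofReal_pos.mpr hpuv, ne_of_gt])
      have h1 : (∑ v', ENNReal.ofReal (p u v') * (G.edist (ι u) (ι v') : ℝ≥0∞)) = ⊤ := by
        refine eq_top_iff.mpr ?_
        rw [← hterm]
        exact Finset.single_le_sum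
          (f := fun v' => ENNReal.ofReal (p u v') * (G.edist (ι u) (ι v') : ℝ≥0∞))
          (fun _ _ => zero_le) (Finset.mem_univ v)
      have h2 : (∑ u', ∑ v', ENNReal.ofReal (p u' v') * (G.edist (ι u') (ι v') : ℝ≥0∞)) = ⊤ := by
        refine eq_top_iff.mpr ?_
        rw [← h1]
        exact Finset.single_le_sum
          (f := fun u' => ∑ v', ENNReal.ofReal (p u' v') * (G.edist (ι u') (ι v') : ℝ≥0∞))
          (fun _ _ => zero_le) (Finset.mem_univ u)
      rw [h2]
      exact ENNReal.mul_top (by norm_num)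
    rw [this]
    exact le_top
end

section
/- Let d ≥ 1 be an integer, let r be a node, let V be a finite set, and let p : V → [0,1] be a probability distribution. Then for every d-ary rooted tree T with root r whose node set contains {r} ∪ V, it holds that Σ_{v ∈ V} p(v)·d_T(r,v) ≥ H_{d+1}(p) − 1. -/
open scoped BigOperators

/-- A rooted tree on node type `N`, given by a parent function together with a depth
function; the depth condition forces acyclicity and that every node is connected to the
root, and `depth v` is the tree distance `d_T(root, v)`. -/
structure ParentTree (N : Type*) where
  root : N
  parent : N → N
  depth : N → ℕ
  parent_root : parent root = root
  depth_root : depth root = 0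
  depth_parent : ∀ n, n ≠ root → depth n = depth (parent n) + 1

namespace ParentTree

variable {N : Type*}

/-- The set of children of a node. -/
def children (T : ParentTree N) (x : N) : Set N :=
  {n | n ≠ T.root ∧ T.parent n = x}

/-- A `d`-ary rooted tree: every node has at most `d` children. -/
def IsDAry (T : ParentTree N) (d : ℕ) : Prop :=
  ∀ x : N, (T.children x).ncard ≤ d

/-- A leaf is a node with no children. -/
def IsLeaf (T : ParentTree N) (x : N) : Prop :=
  T.children x = ∅

end ParentTree

lemma card_depth_le {N : Type} [Fintype N] [DecidableEq N] (T : ParentTree N) {d : ℕ}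
    (hdary : T.IsDAry d) (k : ℕ) :
    (Finset.univ.filter fun n => T.depth n = k).card ≤ d ^ k := by
  induction k with
  | zero =>
    rw [pow_zero]
    apply Finset.card_le_one.mpr
    intro a ha c hc
    simp only [Finset.mem_filter] at ha hc
    have ha' : a = T.root := by
      by_contra h
      have := T.depth_parent a h
      omega
    have hc' : c = T.root := by
      by_contra h
      have := T.depth_parent c h
      omega
    rw [ha', hc']
  | succ k ih =>
    set s := Finset.univ.filter fun n => T.depth n = k + 1 with hs
    have hne : ∀ a ∈ s, a ≠ T.root := by
      intro a ha h
      simp only [hs, Finset.mem_filter] at ha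
      rw [h, T.depth_root] at ha
      omega
    have h1 : s.card ≤ d * (s.image T.parent).card := by
      apply Finset.card_le_mul_card_image
      intro x hx
      have hsub : ((s.filter fun a => T.parent a = x : Finset N) : Set N) ⊆ T.children x := by
        intro a ha
        simp only [Finset.coe_filter, Set.mem_setOf_eq] at ha
        exact ⟨hne a ha.1, ha.2⟩
      calc (s.filter fun a => T.parent a = x).card
          = ((s.filter fun a => T.parent a = x : Finset N) : Set N).ncard := by
            rw [Set.ncard_coe_finset]
        _ ≤ (T.children x).ncard := Set.ncard_le_ncard hsub (Set.toFinite _)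
        _ ≤ d := hdary x
    have h2 : s.image T.parent ⊆ Finset.univ.filter fun n => T.depth n = k := by
      intro x hx
      obtain ⟨a, ha, rfl⟩ := Finset.mem_image.mp hx
      have ha' : T.depth a = k + 1 := by
        simp only [hs, Finset.mem_filter] at ha; exact ha.2
      have := T.depth_parent a (hne a ha)
      simp only [Finset.mem_filter, Finset.mem_univ, true_and]
      omega
    calc s.card ≤ d * (s.image T.parent).card := h1
      _ ≤ d * d ^ k := by
          have := Finset.card_le_card h2
          exact Nat.mul_le_mul_left d (this.trans (ih))
      _ = d ^ (k + 1) := by ring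

lemma kraft_ineq {N : Type} [Fintype N] (T : ParentTree N) {d : ℕ}
    (hdary : T.IsDAry d) :
    ∑ n : N, ((d : ℝ) + 1)⁻¹ ^ T.depth n ≤ (d : ℝ) + 1 := by
  classical
  have hd0 : (0:ℝ) < (d:ℝ) + 1 := by positivity
  set r : ℝ := (d:ℝ) / ((d:ℝ) + 1) with hr
  have hr0 : 0 ≤ r := by positivity
  have hr1 : r < 1 := by rw [hr, div_lt_one hd0]; linarith
  rw [Finset.sum_comp (fun k : ℕ => ((d:ℝ)+1)⁻¹ ^ k) T.depth]
  set s := Finset.univ.image T.depth with hs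
  set M := s.sup id + 1 with hM
  calc ∑ b ∈ s, (Finset.univ.filter fun n => T.depth n = b).card • ((d:ℝ)+1)⁻¹ ^ b
      ≤ ∑ b ∈ s, r ^ b := by
        apply Finset.sum_le_sum
        intro b _
        rw [nsmul_eq_mul]
        have h1 : ((Finset.univ.filter fun n => T.depth n = b).card : ℝ) ≤ (d:ℝ) ^ b := by
          exact_mod_cast card_depth_le T hdary b
        calc ((Finset.univ.filter fun n => T.depth n = b).card : ℝ) * ((d:ℝ)+1)⁻¹ ^ b
            ≤ (d:ℝ) ^ b * ((d:ℝ)+1)⁻¹ ^ b := by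
              apply mul_le_mul_of_nonneg_right h1 (by positivity)
          _ = r ^ b := by rw [← mul_pow, hr, div_eq_mul_inv]
    _ ≤ ∑ b ∈ Finset.range M, r ^ b := by
        apply Finset.sum_le_sum_of_subset_of_nonneg
        · rw [hM]; exact Finset.subset_range_sup_succ s
        · intro i _ _; positivity
    _ ≤ (d:ℝ) + 1 := by
        rw [geom_sum_eq (ne_of_lt hr1) M]
        rw [div_le_iff_of_neg (by linarith : r - 1 < 0)]
        have h2 : (0:ℝ) ≤ r ^ M := pow_nonneg hr0 M
        have h3 : ((d:ℝ) + 1) * (r - 1) = -1 := by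
          rw [hr]; field_simp; ring
        linarith

/-- for any `d`-ary rooted tree whose node set contains `{r} ∪ V`
(the inclusion of `V` given by the embedding `ι`, and `r = T.root`), the expected
depth of `V` under a probability distribution `p` is at least `H_{d+1}(p) − 1`. -/
theorem statement_4 {V : Type} [Fintype V] (d : ℕ) (hd : 1 ≤ d)
    (p : V → ℝ) (hp0 : ∀ v, 0 ≤ p v) (hp1 : ∀ v, p v ≤ 1) (hps : ∑ v, p v = 1)
    (N : Type) [Fintype N] (T : ParentTree N) (ι : V ↪ N)
    (hdary : T.IsDAry d) :
    entropyBase (d + 1) p - 1 ≤ ∑ v, p v * (T.depth (ι v) : ℝ) := by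
  classical
  set b : ℝ := (d:ℝ) + 1 with hb
  have hd1 : (1:ℝ) ≤ (d:ℝ) := by exact_mod_cast hd
  have hb0 : (0:ℝ) < b := by rw [hb]; linarith
  have hb1 : (1:ℝ) < b := by rw [hb]; linarith
  have hlb : 0 < Real.log b := Real.log_pos hb1
  set q : V → ℝ := fun v => b⁻¹ ^ T.depth (ι v) with hq
  have hq0 : ∀ v, 0 < q v := fun v => pow_pos (inv_pos.mpr hb0) _
  have hqsum : ∑ v, q v ≤ b := by
    calc ∑ v, q v = ∑ n ∈ Finset.univ.map ι, b⁻¹ ^ T.depth n := by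
          rw [Finset.sum_map]
      _ ≤ ∑ n : N, b⁻¹ ^ T.depth n := by
          apply Finset.sum_le_sum_of_subset_of_nonneg (Finset.subset_univ _)
          intro i _ _; positivity
      _ ≤ b := kraft_ineq T hdary
  have key : ∀ v : V, (if 0 < p v then p v * Real.logb (↑(d+1)) (1 / p v) else 0)
      ≤ p v * (T.depth (ι v) : ℝ) + p v
        + (q v / b - (if 0 < p v then p v else 0)) / Real.log b := by
    intro v
    by_cases hv : 0 < p v
    · simp only [hv, if_true]
      set D : ℝ := (T.depth (ι v) : ℝ) with hD
      have hlog : Real.log (q v / (p v * b)) ≤ q v / (p v * b) - 1 :=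
        Real.log_le_sub_one_of_pos (by positivity)
      have hexp : Real.log (q v / (p v * b))
          = Real.log (q v) - (Real.log (p v) + Real.log b) := by
        rw [Real.log_div (ne_of_gt (hq0 v)) (by positivity), Real.log_mul (ne_of_gt hv) (ne_of_gt hb0)]
      have hlq : Real.log (q v) = -D * Real.log b := by
        rw [hq]
        simp only [Real.log_pow, Real.log_inv]
        rw [hD]; ring
      have hfrac : p v * (q v / (p v * b)) = q v / b := by
        field_simp
      have hmul : p v * Real.log (q v / (p v * b)) ≤ p v * (q v / (p v * b) - 1) :=
        mul_le_mul_of_nonneg_left hlog hv.le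
      have main : p v * (-Real.log (p v)) ≤ (p v * D + p v) * Real.log b + (q v / b - p v) := by
        rw [hexp, hlq] at hmul
        nlinarith [hmul, hfrac]
      rw [Real.logb, one_div, Real.log_inv]
      have hcast : ((d+1 : ℕ) : ℝ) = b := by push_cast [hb]; ring
      rw [hcast]
      calc p v * (-Real.log (p v) / Real.log b)
          = (p v * (-Real.log (p v))) / Real.log b := by ring
        _ ≤ ((p v * D + p v) * Real.log b + (q v / b - p v)) / Real.log b := by
            gcongr
        _ = p v * D + p v + (q v / b - p v) / Real.log b := by
            field_simp
    · simp only [hv, if_false]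
      have hp : p v = 0 := le_antisymm (not_lt.mp hv) (hp0 v)
      rw [hp]
      simp only [zero_mul, add_zero, zero_add, sub_zero]
      positivity
  have hsum := Finset.sum_le_sum fun v (_ : v ∈ Finset.univ) => key v
  have e1 : ∑ v, (if 0 < p v then p v else 0) = 1 := by
    rw [← hps]
    apply Finset.sum_congr rfl
    intro v _
    by_cases hv : 0 < p v
    · simp [hv]
    · simp [hv, le_antisymm (not_lt.mp hv) (hp0 v)]
  have e2 : ∑ v, (p v * (T.depth (ι v) : ℝ) + p v
        + (q v / b - (if 0 < p v then p v else 0)) / Real.log b)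
      = (∑ v, p v * (T.depth (ι v) : ℝ)) + 1 + ((∑ v, q v) / b - 1) / Real.log b := by
    rw [Finset.sum_add_distrib, Finset.sum_add_distrib, hps, ← Finset.sum_div, Finset.sum_sub_distrib, e1, Finset.sum_div]
  have e3 : ((∑ v, q v) / b - 1) / Real.log b ≤ 0 := by
    apply div_nonpos_of_nonpos_of_nonneg _ hlb.le
    have : (∑ v, q v) / b ≤ 1 := by
      rw [div_le_one hb0]; exact hqsum
    linarith
  rw [entropyBase] at *
  rw [e2] at hsum
  linarith [hsum]
end

section
/- Let G = (V, E) be a finite simple graph with |V| = n ≥ 2, let w : E → ℕ be a weight function, and let K ∈ ℕ. Let G' = (V, E') be the complete graph on V, and define w' : E' → ℕ by w'(e) = n³·w(e) if e ∈ E and w'(e) = 1 if e ∉ E; let K' = n³·(K + 1) − 1. For a bijection f : V → {1, …, n}, define h_f({u,v}) = min((f(u) − f(v)) mod n, (f(v) − f(u)) mod n). Then there exists a bijection f with Σ_{e ∈ E} w(e)·h_f(e) ≤ K if and only if there exists a bijection f with Σ_{e ∈ E'} w'(e)·h_f(e) ≤ K'. -/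
open scoped BigOperators Classical

/-- The circular displacement of the pair `{u, v}` under the arrangement `f`:
`min((f(u) − f(v)) mod n, (f(v) − f(u)) mod n)`. -/
def circDisp {V : Type} [Fintype V] (n : ℕ) (f : V ≃ Fin n) : Sym2 V → ℕ :=
  Sym2.lift ⟨fun u v =>
    min (((f u : ℕ) + n - (f v : ℕ)) % n) (((f v : ℕ) + n - (f u : ℕ)) % n),
    fun u v => min_comm _ _⟩

/-- The cost `Σ_{e ∈ E} w(e)·h_f(e)` of a circular arrangement `f` of the edge-weighted
graph `G`. -/
noncomputable def circCost {V : Type} [Fintype V] (n : ℕ) (G : SimpleGraph V)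
    (w : Sym2 V → ℕ) (f : V ≃ Fin n) : ℕ :=
  ∑ e ∈ G.edgeSet.toFinite.toFinset, w e * circDisp n f e

lemma circDisp_le {V : Type} [Fintype V] {n : ℕ} (hn : 0 < n) (f : V ≃ Fin n)
    (e : Sym2 V) : circDisp n f e ≤ n - 1 := by
  induction e using Sym2.ind with
  | _ u v =>
    have h1 : ((f u : ℕ) + n - (f v : ℕ)) % n < n := Nat.mod_lt _ hn
    have := min_le_left (((f u : ℕ) + n - (f v : ℕ)) % n) (((f v : ℕ) + n - (f u : ℕ)) % n)
    simp only [circDisp, Sym2.lift_mk]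
    omega

lemma decomp {V : Type} [Fintype V] (n : ℕ) (G : SimpleGraph V)
    (w : Sym2 V → ℕ) (w' : Sym2 V → ℕ)
    (hw' : ∀ e : Sym2 V, w' e = if e ∈ G.edgeSet then n ^ 3 * w e else 1)
    (f : V ≃ Fin n) :
    circCost n (⊤ : SimpleGraph V) w' f
      = n ^ 3 * circCost n G w f
        + ∑ e ∈ (⊤ : SimpleGraph V).edgeSet.toFinite.toFinset \
            G.edgeSet.toFinite.toFinset, circDisp n f e := by
  classical
  set E := G.edgeSet.toFinite.toFinset with hE
  set E' := (⊤ : SimpleGraph V).edgeSet.toFinite.toFinset with hE'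
  have hsub : E ⊆ E' := by
    intro e he
    simp only [hE, hE', Set.Finite.mem_toFinset] at *
    exact (SimpleGraph.edgeSet_subset_edgeSet.mpr le_top) he
  have hsplit : circCost n (⊤ : SimpleGraph V) w' f
      = ∑ e ∈ E, w' e * circDisp n f e + ∑ e ∈ E' \ E, w' e * circDisp n f e := by
    rw [circCost, ← Finset.sum_sdiff hsub]; ring
  rw [hsplit]
  have h1 : ∑ e ∈ E, w' e * circDisp n f e = n ^ 3 * circCost n G w f := by
    rw [circCost, Finset.mul_sum]
    refine Finset.sum_congr rfl fun e he => ?_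
    have : e ∈ G.edgeSet := by simpa [hE, Set.Finite.mem_toFinset] using he
    rw [hw' e, if_pos this]; ring
  have h2 : ∑ e ∈ E' \ E, w' e * circDisp n f e = ∑ e ∈ E' \ E, circDisp n f e := by
    refine Finset.sum_congr rfl fun e he => ?_
    have : e ∉ G.edgeSet := by
      have := (Finset.mem_sdiff.mp he).2
      simpa [hE, Set.Finite.mem_toFinset] using this
    rw [hw' e, if_neg this, one_mul]
  rw [h1, h2]

/-- reduction of undirected circular arrangement to the connected case.
With `w'(e) = n³·w(e)` for `e ∈ E` and `w'(e) = 1` otherwise, and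
`K' = n³·(K + 1) − 1`, the graph `G` has an arrangement of cost at most `K` iff the
complete graph with weights `w'` has an arrangement of cost at most `K'`. -/
theorem statement_13 {V : Type} [Fintype V] (n : ℕ) (hn : Fintype.card V = n)
    (hn2 : 2 ≤ n) (G : SimpleGraph V) (w : Sym2 V → ℕ) (K : ℕ)
    (w' : Sym2 V → ℕ)
    (hw' : ∀ e : Sym2 V, w' e = if e ∈ G.edgeSet then n ^ 3 * w e else 1)
    (K' : ℕ) (hK' : K' = n ^ 3 * (K + 1) - 1) :
    (∃ f : V ≃ Fin n, circCost n G w f ≤ K) ↔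
      (∃ f : V ≃ Fin n, circCost n (⊤ : SimpleGraph V) w' f ≤ K') := by
  classical
  have hn0 : 0 < n := by omega
  have hS : ∀ f : V ≃ Fin n,
      (∑ e ∈ (⊤ : SimpleGraph V).edgeSet.toFinite.toFinset \
        G.edgeSet.toFinite.toFinset, circDisp n f e) ≤ n ^ 3 - 1 := by
    intro f
    have hcard : ((⊤ : SimpleGraph V).edgeSet.toFinite.toFinset \
        G.edgeSet.toFinite.toFinset).card ≤ Fintype.card (Sym2 V) := by
      simpa using Finset.card_le_univ _
    have hcard2 : Fintype.card (Sym2 V) = n * (n + 1) / 2 := by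
      rw [Sym2.card, hn, Nat.choose_two_right, Nat.add_sub_cancel, Nat.mul_comm]
    calc (∑ e ∈ (⊤ : SimpleGraph V).edgeSet.toFinite.toFinset \
        G.edgeSet.toFinite.toFinset, circDisp n f e)
        ≤ ∑ _e ∈ (⊤ : SimpleGraph V).edgeSet.toFinite.toFinset \
            G.edgeSet.toFinite.toFinset, (n - 1) :=
          Finset.sum_le_sum fun e _ => circDisp_le hn0 f e
      _ = ((⊤ : SimpleGraph V).edgeSet.toFinite.toFinset \
            G.edgeSet.toFinite.toFinset).card * (n - 1) := by
          rw [Finset.sum_const, smul_eq_mul]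
      _ ≤ (n * (n + 1) / 2) * (n - 1) := by
          apply Nat.mul_le_mul_right
          rw [← hcard2]; exact hcard
      _ ≤ n ^ 2 * (n - 1) := by
          apply Nat.mul_le_mul_right
          have : n * (n + 1) ≤ 2 * n ^ 2 := by nlinarith
          omega
      _ ≤ n ^ 3 - 1 := by
          have e1 : n ^ 3 = n ^ 2 * n := by ring
          have e2 : n ^ 2 * (n - 1) + n ^ 2 = n ^ 2 * n := by
            rw [← Nat.mul_succ]; congr 1; omega
          have hm : 1 ≤ n ^ 2 := Nat.one_le_pow _ _ hn0
          omega
  constructor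
  · rintro ⟨f, hf⟩
    refine ⟨f, ?_⟩
    rw [decomp n G w w' hw' f, hK']
    have := hS f
    have h3 : n ^ 3 * circCost n G w f ≤ n ^ 3 * K := Nat.mul_le_mul_left _ hf
    have hn3 : 1 ≤ n ^ 3 := Nat.one_le_pow _ _ hn0
    have e : n ^ 3 * (K + 1) = n ^ 3 * K + n ^ 3 := by ring
    omega
  · rintro ⟨f, hf⟩
    refine ⟨f, ?_⟩
    have hd := decomp n G w w' hw' f
    rw [hK'] at hf
    have hn3 : 1 ≤ n ^ 3 := Nat.one_le_pow _ _ hn0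
    by_contra hc
    push_neg at hc
    have h4 : n ^ 3 * (K + 1) ≤ n ^ 3 * circCost n G w f := Nat.mul_le_mul_left _ hc
    have h5 : n ^ 3 * (K + 1) ≤ circCost n (⊤ : SimpleGraph V) w' f := by
      rw [hd]; exact le_trans h4 (Nat.le_add_right _ _)
    have h6 : 0 < n ^ 3 * (K + 1) := Nat.mul_pos (by omega) (by omega)
    exact absurd (le_trans h5 hf) (Nat.not_le.mpr (Nat.sub_lt h6 one_pos))
end
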